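/- arXiv:1703.04345 — 2 statements merged into one kernel-verified Lean document; each statement's English description precedes it below -/
import Mathlib

section
/- In the group T'_{8·3^q}, the commutator subgroup is ⟨a, b⟩, which is isomorphic to the quaternion group Q₈, and the abelianization is cyclic of order 3^q generated by the image of w. -/
/-- Relations of the generalized binary tetrahedral group
`T'_{8·3^q} = ⟨b, a, w | a² = b² = (ab)², a⁴ = w^{3^q} = 1, wa = bw, wb = abw⟩`,
with `b` the letter `0`, `a` the letter `1` and `w` the letter `2`. -/
def TprimeRels (q : ℕ) : Set (FreeGroup (Fin 3)) :=
  { (FreeGroup.of 1) ^ 2 * ((FreeGroup.of 0) ^ 2)⁻¹,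
    (FreeGroup.of 1) ^ 2 * ((FreeGroup.of 1 * FreeGroup.of 0) ^ 2)⁻¹,
    (FreeGroup.of 1) ^ 4,
    (FreeGroup.of 2) ^ (3 ^ q),
    (FreeGroup.of 2 * FreeGroup.of 1) * (FreeGroup.of 0 * FreeGroup.of 2)⁻¹,
    (FreeGroup.of 2 * FreeGroup.of 0) *
      (FreeGroup.of 1 * FreeGroup.of 0 * FreeGroup.of 2)⁻¹ }

/-- The generalized binary tetrahedral group `T'_{8·3^q}`. -/
abbrev Tprime (q : ℕ) := PresentedGroup (TprimeRels q)

/-- The generator `b` of `T'_{8·3^q}`. -/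
def Tprime.b (q : ℕ) : Tprime q := PresentedGroup.of 0

/-- The generator `a` of `T'_{8·3^q}`. -/
def Tprime.a (q : ℕ) : Tprime q := PresentedGroup.of 1

/-- The generator `w` of `T'_{8·3^q}`. -/
def Tprime.w (q : ℕ) : Tprime q := PresentedGroup.of 2

/-!
The relations `wa = bw`, `wb = abw` say that conjugation by `w` maps `a ↦ b ↦ ab`, so `⟨a, b⟩` is
normal; together with the abelian subgroup `⟨w⟩` it generates the group, hence contains the
commutator subgroup. Conversely, in any abelian quotient the same relations force `a = b = 1`.

The relations `a² = b² = (ab)²`, `a⁴ = 1` give a surjection `Q₈ → ⟨a, b⟩`, `i ↦ a`, `j ↦ b`. It is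
injective because `T'_{8·3^q}` acts on `Q₈` by sending `a`, `b` to left multiplication by `i`, `j`
and `w` to the automorphism `i ↦ j ↦ k ↦ i` (its order 3 divides `3^q` since `q ≥ 1`); on `Q₈`
this action is the Cayley embedding.

The abelianization is generated by the image of `w`, whose order divides `3^q` and is exactly
`3^q` because of the map to `ZMod (3^q)` sending `w` to `1`.
-/

theorem zpow_zmod_cast_intCast {G : Type*} [Group G] {m : ℕ} {x : G} (hx : x ^ m = 1) (k : ℤ) :
    x ^ (((k : ZMod m).cast : ℤ)) = x ^ k := by
  rw [zpow_eq_zpow_iff_modEq]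
  exact ((ZMod.intCast_eq_intCast_iff _ _ _).mp (ZMod.intCast_zmod_cast _)).of_dvd
    (Int.natCast_dvd_natCast.mpr (orderOf_dvd_of_pow_eq_one hx))

theorem zpow_mul_eq_mul_zpow_neg {G : Type*} [Group G] {x y : G}
    (hyx : y⁻¹ * x * y = x⁻¹) (k : ℤ) : x ^ k * y = y * x ^ (-k) := by
  have h : y⁻¹ * x ^ k * y = x ^ (-k) := by
    rw [← inv_inv y, inv_inv y⁻¹, ← conj_zpow, inv_inv, hyx, inv_zpow']
  rw [← h]
  group

theorem MulAut.toPerm_mul_toPermHom {G : Type*} [Group G] (σ : MulAut G) (x : G) :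
    MulAut.toPerm G σ * MulAction.toPermHom G G x =
      MulAction.toPermHom G G (σ x) * MulAut.toPerm G σ :=
  Equiv.ext fun y ↦ map_mul σ x y

namespace QuaternionGroup

variable {n : ℕ} {G : Type*} [Group G]

theorem a_one_zpow (k : ℤ) : (a 1 : QuaternionGroup n) ^ k = a k := by
  induction k using Int.induction_on with
  | zero => rw [zpow_zero, Int.cast_zero, a_zero]
  | succ k ih => rw [zpow_add_one, ih, a_mul_a]; push_cast; rfl
  | pred k ih =>
    rw [zpow_sub_one, ih, show (a 1)⁻¹ = (a (-1) : QuaternionGroup n) from rfl, a_mul_a,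
      ← sub_eq_add_neg]
    push_cast; rfl

theorem closure_a_one_xa_zero :
    Subgroup.closure {a 1, xa 0} = (⊤ : Subgroup (QuaternionGroup n)) := by
  have ha : a 1 ∈ Subgroup.closure {(a 1 : QuaternionGroup n), xa 0} :=
    Subgroup.subset_closure (by simp)
  have hxa : xa 0 ∈ Subgroup.closure {(a 1 : QuaternionGroup n), xa 0} :=
    Subgroup.subset_closure (by simp)
  rw [Subgroup.eq_top_iff']
  rintro (i | i) <;> obtain ⟨k, rfl⟩ := ZMod.intCast_surjective i
  · exact a_one_zpow k ▸ zpow_mem ha k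
  · simpa [a_one_zpow, xa_mul_a] using mul_mem hxa (zpow_mem ha k)

/-- The universal property of the presentation
`QuaternionGroup n = ⟨x, y | x^(2n) = 1, y² = xⁿ, y⁻¹xy = x⁻¹⟩`, where `x = a 1` and `y = xa 0`. -/
def lift (x y : G) (hx : x ^ (2 * n) = 1) (hy : y ^ 2 = x ^ n) (hyx : y⁻¹ * x * y = x⁻¹) :
    QuaternionGroup n →* G where
  toFun
    | a i => x ^ (i.cast : ℤ)
    | xa i => y * x ^ (i.cast : ℤ)
  map_one' := by
    rw [one_def, ← Int.cast_zero]
    simp only [zpow_zmod_cast_intCast hx, zpow_zero]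
  map_mul' g h := by
    rcases g with (i | i) <;> rcases h with (j | j) <;>
      obtain ⟨i, rfl⟩ := ZMod.intCast_surjective i <;>
      obtain ⟨j, rfl⟩ := ZMod.intCast_surjective j
    · simp only [a_mul_a, ← Int.cast_add, zpow_zmod_cast_intCast hx, zpow_add]
    · simp only [a_mul_xa, ← Int.cast_sub, zpow_zmod_cast_intCast hx]
      rw [← mul_assoc, zpow_mul_eq_mul_zpow_neg hyx, mul_assoc, ← zpow_add, neg_add_eq_sub]
    · simp only [xa_mul_a, ← Int.cast_add, zpow_zmod_cast_intCast hx, zpow_add, mul_assoc]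
    · rw [xa_mul_xa, show (n + j - i : ZMod (2 * n)) = ((n + j - i : ℤ) : ZMod (2 * n)) by
        push_cast; rfl]
      simp only [zpow_zmod_cast_intCast hx]
      rw [mul_assoc, ← mul_assoc (x ^ i), zpow_mul_eq_mul_zpow_neg hyx, ← mul_assoc,
        ← mul_assoc, ← sq, hy, mul_assoc, ← zpow_natCast, ← zpow_add, ← zpow_add]
      ring_nf

variable {x y : G} (hx : x ^ (2 * n) = 1) (hy : y ^ 2 = x ^ n) (hyx : y⁻¹ * x * y = x⁻¹)

@[simp] theorem lift_a (k : ℤ) : lift x y hx hy hyx (a k) = x ^ k :=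
  zpow_zmod_cast_intCast hx k

@[simp] theorem lift_xa (k : ℤ) : lift x y hx hy hyx (xa k) = y * x ^ k :=
  congrArg (y * ·) (zpow_zmod_cast_intCast hx k)

@[simp] theorem lift_a_one : lift x y hx hy hyx (a 1) = x := by
  simpa using lift_a hx hy hyx 1

@[simp] theorem lift_xa_zero : lift x y hx hy hyx (xa 0) = y := by
  simpa using lift_xa hx hy hyx 0

theorem range_lift : (lift x y hx hy hyx).range = Subgroup.closure {x, y} := by
  rw [MonoidHom.range_eq_map, ← closure_a_one_xa_zero, MonoidHom.map_closure, Set.image_pair,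
    lift_a_one, lift_xa_zero]

/-- In `QuaternionGroup 2` take `i = a 1`, `j = xa 0`, `k = a 1 * xa 0`; this is `i ↦ j ↦ k`. -/
private def cycleHom : QuaternionGroup 2 →* QuaternionGroup 2 :=
  lift (xa 0) (a 1 * xa 0) (by decide) (by decide) (by decide)

private theorem cycleHom_cube : cycleHom.comp (cycleHom.comp cycleHom) = MonoidHom.id _ :=
  MonoidHom.eq_of_eqOn_dense closure_a_one_xa_zero <| by
    rintro _ (rfl | rfl) <;>
      simp only [cycleHom, MonoidHom.comp_apply, map_mul, lift_a_one, lift_xa_zero] <;> decide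

def cycleIJK : MulAut (QuaternionGroup 2) :=
  cycleHom.toMulEquiv (cycleHom.comp cycleHom) cycleHom_cube cycleHom_cube

theorem cycleIJK_a_one : cycleIJK (a 1) = xa 0 :=
  show cycleHom (a 1) = xa 0 from lift_a_one ..

theorem cycleIJK_xa_zero : cycleIJK (xa 0) = a 1 * xa 0 :=
  show cycleHom (xa 0) = a 1 * xa 0 from lift_xa_zero ..

theorem cycleIJK_pow_three : cycleIJK ^ 3 = 1 :=
  MulEquiv.ext fun g ↦ DFunLike.congr_fun cycleHom_cube g

end QuaternionGroup

namespace Tprime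

section Relations

structure SatisfiesRels (q : ℕ) {G : Type*} [Group G] (b a w : G) : Prop where
  sq_a_eq_sq_b : a ^ 2 = b ^ 2
  sq_a_eq_sq_mul : a ^ 2 = (a * b) ^ 2
  pow_four : a ^ 4 = 1
  pow_w : w ^ 3 ^ q = 1
  mul_a : w * a = b * w
  mul_b : w * b = a * b * w

variable {q : ℕ} {G H : Type*} [Group G] [Group H] {b a w : G}

theorem satisfiesRels_iff :
    SatisfiesRels q b a w ↔ ∀ r ∈ TprimeRels q, FreeGroup.lift ![b, a, w] r = 1 := by
  simp only [TprimeRels, Set.mem_insert_iff, Set.mem_singleton_iff, forall_eq_or_imp, forall_eq,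
    map_mul, map_inv, map_pow, FreeGroup.lift_apply_of, mul_inv_eq_one, Fin.isValue,
    Matrix.cons_val_zero, Matrix.cons_val_one, Matrix.cons_val_two]
  exact ⟨fun ⟨h₁, h₂, h₃, h₄, h₅, h₆⟩ ↦ ⟨h₁, h₂, h₃, h₄, h₅, h₆⟩,
    fun ⟨h₁, h₂, h₃, h₄, h₅, h₆⟩ ↦ ⟨h₁, h₂, h₃, h₄, h₅, h₆⟩⟩

def lift (h : SatisfiesRels q b a w) : Tprime q →* G :=
  PresentedGroup.toGroup (satisfiesRels_iff.mp h)

@[simp] theorem lift_b (h : SatisfiesRels q b a w) : lift h (Tprime.b q) = b :=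
  PresentedGroup.toGroup.of _

@[simp] theorem lift_a (h : SatisfiesRels q b a w) : lift h (Tprime.a q) = a :=
  PresentedGroup.toGroup.of _

@[simp] theorem lift_w (h : SatisfiesRels q b a w) : lift h (Tprime.w q) = w :=
  PresentedGroup.toGroup.of _

theorem SatisfiesRels.map (h : SatisfiesRels q b a w) (f : G →* H) :
    SatisfiesRels q (f b) (f a) (f w) where
  sq_a_eq_sq_b := by rw [← map_pow, ← map_pow, h.sq_a_eq_sq_b]
  sq_a_eq_sq_mul := by rw [← map_pow, ← map_mul, ← map_pow, h.sq_a_eq_sq_mul]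
  pow_four := by rw [← map_pow, h.pow_four, map_one]
  pow_w := by rw [← map_pow, h.pow_w, map_one]
  mul_a := by rw [← map_mul, ← map_mul, h.mul_a]
  mul_b := by rw [← map_mul, ← map_mul, ← map_mul, h.mul_b]

theorem SatisfiesRels.inv_mul_mul (h : SatisfiesRels q b a w) : b⁻¹ * a * b = a⁻¹ := by
  have hbab : b * a * b = a := by
    have := h.sq_a_eq_sq_mul
    rw [sq, sq, mul_assoc] at this
    rw [mul_assoc]
    exact (mul_left_cancel this).symm
  rw [eq_inv_iff_mul_eq_one, ← h.pow_four]
  calc b⁻¹ * a * b * a = b⁻¹ * (b * a * b) * b * a := by rw [hbab]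
    _ = a * b ^ 2 * a := by simp only [sq, mul_assoc, inv_mul_cancel_left]
    _ = a ^ 4 := by rw [← h.sq_a_eq_sq_b]; group

theorem SatisfiesRels.a_eq_b {G : Type*} [CommGroup G] {b a w : G}
    (h : SatisfiesRels q b a w) : a = b :=
  mul_left_cancel (h.mul_a.trans (mul_comm b w))

theorem SatisfiesRels.a_eq_one {G : Type*} [CommGroup G] {b a w : G}
    (h : SatisfiesRels q b a w) : a = 1 := by
  have := h.mul_b
  rw [mul_comm (a * b) w, ← h.a_eq_b] at this
  exact left_eq_mul.mp (mul_left_cancel this)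

theorem SatisfiesRels.b_eq_one {G : Type*} [CommGroup G] {b a w : G}
    (h : SatisfiesRels q b a w) : b = 1 :=
  h.a_eq_b ▸ h.a_eq_one

end Relations

variable {q : ℕ} {H : Type*} [Group H]

variable (q) in
theorem satisfiesRels : SatisfiesRels q (b q) (a q) (w q) := by
  have h : FreeGroup.lift ![b q, a q, w q] = PresentedGroup.mk _ := by
    ext i; fin_cases i <;> rfl
  exact satisfiesRels_iff.mpr fun r hr ↦ h ▸ PresentedGroup.one_of_mem hr

theorem eq_top_of_mem {K : Subgroup (Tprime q)} (hb : b q ∈ K) (ha : a q ∈ K) (hw : w q ∈ K) :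
    K = ⊤ :=
  K.eq_top_iff'.mpr <| PresentedGroup.generated_by _ K fun i ↦ by fin_cases i <;> assumption

theorem zpowers_w_eq_top {f : Tprime q →* H} (hf : Function.Surjective f) (hb : f (b q) = 1)
    (ha : f (a q) = 1) : Subgroup.zpowers (f (w q)) = ⊤ := by
  have : (Subgroup.zpowers (f (w q))).comap f = ⊤ :=
    eq_top_of_mem (by simp [hb]) (by simp [ha]) (Subgroup.mem_zpowers _)
  rw [← Subgroup.map_comap_eq_self_of_surjective hf (Subgroup.zpowers _), this,
    ← MonoidHom.range_eq_map, MonoidHom.range_eq_top_of_surjective f hf]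

theorem closure_a_b_normal : (Subgroup.closure {a q, b q}).Normal := by
  have ha : a q ∈ Subgroup.closure {a q, b q} := Subgroup.subset_closure (by simp)
  have hb : b q ∈ Subgroup.closure {a q, b q} := Subgroup.subset_closure (by simp)
  have hwa : MulAut.conj (w q) (a q) = b q := by
    rw [MulAut.conj_apply, (satisfiesRels q).mul_a, mul_inv_cancel_right]
  have hwb : MulAut.conj (w q) (b q) = a q * b q := by
    rw [MulAut.conj_apply, (satisfiesRels q).mul_b, mul_inv_cancel_right]
  have hab' : a q * b q ∈ Subgroup.closure {b q, a q * b q} := Subgroup.subset_closure (by simp)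
  have hb' : b q ∈ Subgroup.closure {b q, a q * b q} := Subgroup.subset_closure (by simp)
  have hw : (Subgroup.closure {a q, b q}).map (MulAut.conj (w q)) =
      Subgroup.closure {a q, b q} := by
    rw [MonoidHom.map_closure, MonoidHom.coe_coe, Set.image_pair, hwa, hwb]
    refine le_antisymm (Subgroup.closure_le _ |>.mpr ?_) (Subgroup.closure_le _ |>.mpr ?_)
    · simp [Set.insert_subset_iff, hb, mul_mem ha hb]
    · simpa [Set.insert_subset_iff, hb'] using mul_mem hab' (inv_mem hb')
  exact Subgroup.normalizer_eq_top_iff.mp <| eq_top_of_mem (Subgroup.le_normalizer hb)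
    (Subgroup.le_normalizer ha) (Subgroup.mem_normalizer_iff_map_conj_eq.mpr hw)

theorem commutator_eq_closure_a_b : commutator (Tprime q) = Subgroup.closure {a q, b q} := by
  have := closure_a_b_normal (q := q)
  have h := (satisfiesRels q).map Abelianization.of
  refine le_antisymm (Subgroup.Normal.commutator_le_of_self_sup_commutative_eq_top
    (H := Subgroup.zpowers (w q)) ?_ inferInstance) ?_
  · exact eq_top_of_mem (Subgroup.mem_sup_left (Subgroup.subset_closure (by simp)))
      (Subgroup.mem_sup_left (Subgroup.subset_closure (by simp)))
      (Subgroup.mem_sup_right (Subgroup.mem_zpowers _))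
  · rw [Subgroup.closure_le, ← Abelianization.ker_of]
    simp only [Set.insert_subset_iff, Set.singleton_subset_iff, SetLike.mem_coe,
      MonoidHom.mem_ker, h.a_eq_one, h.b_eq_one, and_self]

local notation "Q₈" => QuaternionGroup 2
local notation "L" => MulAction.toPermHom Q₈ Q₈

theorem satisfiesRels_toPerm (hq : 1 ≤ q) :
    SatisfiesRels q (L (.xa 0)) (L (.a 1)) (MulAut.toPerm Q₈ QuaternionGroup.cycleIJK) where
  sq_a_eq_sq_b := by rw [← map_pow, ← map_pow]; exact congrArg L (by decide)
  sq_a_eq_sq_mul := by rw [← map_pow, ← map_mul, ← map_pow]; exact congrArg L (by decide)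
  pow_four := by rw [← map_pow, ← map_one L]; exact congrArg L (by decide)
  pow_w := by
    obtain ⟨k, hk⟩ := dvd_pow_self 3 (Nat.one_le_iff_ne_zero.mp hq)
    rw [← map_pow, hk, pow_mul, QuaternionGroup.cycleIJK_pow_three, one_pow, map_one]
  mul_a := by rw [MulAut.toPerm_mul_toPermHom, QuaternionGroup.cycleIJK_a_one]
  mul_b := by rw [MulAut.toPerm_mul_toPermHom, QuaternionGroup.cycleIJK_xa_zero, map_mul]

variable (q) in
def ofQuaternion : Q₈ →* Tprime q :=
  QuaternionGroup.lift (a q) (b q) (satisfiesRels q).pow_four (satisfiesRels q).sq_a_eq_sq_b.symm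
    (satisfiesRels q).inv_mul_mul

theorem range_ofQuaternion : (ofQuaternion q).range = Subgroup.closure {a q, b q} :=
  QuaternionGroup.range_lift ..

theorem ofQuaternion_injective (hq : 1 ≤ q) : Function.Injective (ofQuaternion q) := by
  have h : (lift (satisfiesRels_toPerm hq)).comp (ofQuaternion q) = L :=
    MonoidHom.eq_of_eqOn_dense QuaternionGroup.closure_a_one_xa_zero <| by
      rintro _ (rfl | rfl) <;> simp [ofQuaternion]
  refine Function.Injective.of_comp (f := lift (satisfiesRels_toPerm hq)) ?_
  rw [← MonoidHom.coe_comp, h]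
  exact MulAction.toPerm_injective

theorem satisfiesRels_toZMod :
    SatisfiesRels q 1 1 (.ofAdd 1 : Multiplicative (ZMod (3 ^ q))) where
  sq_a_eq_sq_b := rfl
  sq_a_eq_sq_mul := by rw [mul_one]
  pow_four := one_pow 4
  pow_w := by rw [← ofAdd_nsmul, nsmul_one, ZMod.natCast_self, ofAdd_zero]
  mul_a := by rw [mul_one, one_mul]
  mul_b := by rw [mul_one, one_mul, one_mul]

theorem orderOf_abelianization_of_w : orderOf (Abelianization.of (w q)) = 3 ^ q := by
  refine Nat.dvd_antisymm (orderOf_dvd_of_pow_eq_one ((satisfiesRels q).map _).pow_w) ?_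
  have h := orderOf_map_dvd (Abelianization.lift (lift satisfiesRels_toZMod)) (.of (w q))
  rwa [Abelianization.lift_apply_of, lift_w, orderOf_ofAdd_eq_addOrderOf,
    ZMod.addOrderOf_one] at h

theorem zpowers_abelianization_of_w : Subgroup.zpowers (Abelianization.of (w q)) = ⊤ :=
  have h := (satisfiesRels q).map Abelianization.of
  zpowers_w_eq_top (QuotientGroup.mk'_surjective _) h.b_eq_one h.a_eq_one

end Tprime

/-- In `T'_{8·3^q}`, the commutator subgroup is `⟨a, b⟩ ≅ Q₈`, and the abelianization is
cyclic of order `3^q` generated by the image of `w`. -/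
theorem commutator_abelianization_Tprime (q : ℕ) (hq : 1 ≤ q) :
    commutator (Tprime q) = Subgroup.closure {Tprime.a q, Tprime.b q} ∧
      Nonempty ((Subgroup.closure {Tprime.a q, Tprime.b q} : Subgroup (Tprime q)) ≃*
        QuaternionGroup 2) ∧
      Subgroup.zpowers (Abelianization.of (Tprime.w q)) = ⊤ ∧
      Nat.card (Abelianization (Tprime q)) = 3 ^ q :=
  ⟨Tprime.commutator_eq_closure_a_b,
    ⟨(MulEquiv.subgroupCongr Tprime.range_ofQuaternion.symm).trans
      (MonoidHom.ofInjective (Tprime.ofQuaternion_injective hq)).symm⟩,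
    Tprime.zpowers_abelianization_of_w,
    (orderOf_eq_card_of_zpowers_eq_top Tprime.zpowers_abelianization_of_w).symm.trans
      Tprime.orderOf_abelianization_of_w⟩
end

section
/- Every non-cyclic subgroup of D'_{n·2^q} (n odd, n > 1, q > 1) is of the form ⟨u^k, w⟩ ≅ D'_{(n/k)·2^q} for some divisor k of n, up to conjugacy; moreover such a subgroup is normal only if it is the whole group. -/
/-- Relations of the dicyclic-type group
`D'_{n·2^q} = ⟨u, w | uⁿ = w^{2^q} = 1, uwu = w⟩`,
with `u` the letter `0` and `w` the letter `1`. -/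
def DprimeRels (n q : ℕ) : Set (FreeGroup (Fin 2)) :=
  { (FreeGroup.of 0) ^ n,
    (FreeGroup.of 1) ^ (2 ^ q),
    (FreeGroup.of 0 * FreeGroup.of 1 * FreeGroup.of 0) * (FreeGroup.of 1)⁻¹ }

/-- The dicyclic-type group `D'_{n·2^q}`. -/
abbrev Dprime (n q : ℕ) := PresentedGroup (DprimeRels n q)

/-- The generator `u` of `D'_{n·2^q}`. -/
def Dprime.u (n q : ℕ) : Dprime n q := PresentedGroup.of 0

/-- The generator `w` of `D'_{n·2^q}`. -/
def Dprime.w (n q : ℕ) : Dprime n q := PresentedGroup.of 1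

/-!
`D'_{n·2^q}` is the semidirect product `ℤ/n ⋊ ℤ/2^q` in which `w` inverts `u`. The elements with
even `ℤ/2^q`-coordinate form `ℤ/n × 2ℤ/2^q`, which is cyclic because `n` is odd, so a non-cyclic
subgroup `H` has an element with odd coordinate, and a suitable power of it is `u^a w`. Since `2` is
invertible mod `n`, conjugating by a power of `u` turns `u^a w` into `w`; a subgroup containing `w`
is generated by `w` and its intersection `⟨u^k⟩` with `⟨u⟩`, and `⟨u^k, w⟩` is the image of the
embedding `D'_{(n/k)·2^q} → D'_{n·2^q}`, `u ↦ u^k`, `w ↦ w`. Finally a normal subgroup containing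
`w` contains the commutator `u w u⁻¹ w⁻¹ = u²`, hence `u`, as `n` is odd.
-/

section

variable {G : Type*} [Group G]

lemma zpow_eq_zpow_of_intCast_eq {g : G} {n : ℕ} (hg : g ^ n = 1) {i j : ℤ}
    (h : (i : ZMod n) = j) : g ^ i = g ^ j := by
  rw [zpow_eq_zpow_emod' i hg, zpow_eq_zpow_emod' j hg, (ZMod.intCast_eq_intCast_iff' i j n).1 h]

lemma pow_mul_zpow_mul_inv_of_conj_eq_inv {x y : G} (h : y * x * y⁻¹ = x⁻¹) (j : ℕ) (i : ℤ) :
    y ^ j * x ^ i * (y ^ j)⁻¹ = x ^ ((-1) ^ j * i) := by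
  induction j with
  | zero => simp
  | succ j ih =>
    calc y ^ (j + 1) * x ^ i * (y ^ (j + 1))⁻¹ = y * (y ^ j * x ^ i * (y ^ j)⁻¹) * y⁻¹ := by
          group
      _ = (y * x * y⁻¹) ^ ((-1) ^ j * i) := by rw [ih, conj_zpow]
      _ = x ^ ((-1) ^ (j + 1) * i) := by rw [h, inv_zpow', pow_succ]; ring_nf

lemma pow_zmod_val_one {g : G} {m : ℕ} (hg : g ^ m = 1) : g ^ (1 : ZMod m).val = g := by
  rw [ZMod.val_one_eq_one_mod, ← pow_eq_pow_mod 1 hg, pow_one]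

end

lemma Subgroup.map_map_conj_mulEquiv {G G' : Type*} [Group G] [Group G'] (e : G ≃* G')
    (H : Subgroup G) (g : G) :
    (H.map (MulAut.conj g).toMonoidHom).map (e : G →* G') =
      (H.map (e : G →* G')).map (MulAut.conj (e g)).toMonoidHom := by
  rw [Subgroup.map_map, Subgroup.map_map]
  congr 1
  ext x
  simp

lemma ZMod.exists_dvd_eq_zmultiples {n : ℕ} (A : AddSubgroup (ZMod n)) :
    ∃ k : ℕ, k ∣ n ∧ A = AddSubgroup.zmultiples (k : ZMod n) := by
  obtain ⟨a, ha⟩ := Int.subgroup_cyclic (A.comap (Int.castAddHom (ZMod n)))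
  rw [← AddSubgroup.zmultiples_eq_closure, ← Int.zmultiples_natAbs] at ha
  refine ⟨a.natAbs, ?_, ?_⟩
  · have hn : (n : ℤ) ∈ A.comap (Int.castAddHom (ZMod n)) := by simp
    rw [ha, Int.mem_zmultiples_iff] at hn
    exact Int.natCast_dvd_natCast.1 hn
  · rw [← AddSubgroup.map_comap_eq_self_of_surjective
      (f := Int.castAddHom (ZMod n)) ZMod.intCast_surjective A, ha,
      AddMonoidHom.map_zmultiples]
    simp

def ZMod.scale {k m n : ℕ} (hkm : k * m = n) : ZMod m →+ ZMod n :=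
  ZMod.lift m ⟨zmultiplesHom (ZMod n) (k : ZMod n), by
    rw [zmultiplesHom_apply, natCast_zsmul, nsmul_eq_mul, ← Nat.cast_mul, mul_comm, hkm,
      ZMod.natCast_self]⟩

lemma ZMod.scale_intCast {k m n : ℕ} (hkm : k * m = n) (x : ℤ) :
    ZMod.scale hkm x = x • (k : ZMod n) :=
  ZMod.lift_coe _ _ _

lemma ZMod.scale_one {k m n : ℕ} (hkm : k * m = n) : ZMod.scale hkm 1 = k := by
  simpa using ZMod.scale_intCast hkm 1

lemma ZMod.scale_injective {k m n : ℕ} (hk : k ≠ 0) (hkm : k * m = n) :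
    Function.Injective (ZMod.scale hkm) := by
  rw [injective_iff_map_eq_zero]
  intro x hx
  obtain ⟨x, rfl⟩ := ZMod.intCast_surjective x
  rw [ZMod.scale_intCast, zsmul_eq_mul, ← Int.cast_natCast, ← Int.cast_mul,
    ZMod.intCast_zmod_eq_zero_iff_dvd, ← hkm, Nat.cast_mul, mul_comm x] at hx
  exact (ZMod.intCast_zmod_eq_zero_iff_dvd x m).2
    ((mul_dvd_mul_iff_left (Int.natCast_ne_zero.2 hk)).1 hx)

/-- `A ⋊ ℤ/2^q`, the generator of `ℤ/2^q` acting on `A` by negation; `D'_{n·2^q}` is isomorphic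
to `DprimeModel (ZMod n) q` via `u ↦ ⟨1, 0⟩`, `w ↦ ⟨0, 1⟩` (`Dprime.equivModel`). -/
@[ext]
structure DprimeModel (A : Type*) (q : ℕ) where
  a : A
  b : ZMod (2 ^ q)

namespace DprimeModel

variable {A B : Type*} [AddCommGroup A] [AddCommGroup B] {q : ℕ}

def sign (b : ZMod (2 ^ q)) : ℤˣ := (-1) ^ b.val

@[simp] lemma sign_zero : sign (0 : ZMod (2 ^ q)) = 1 := by simp [sign]

lemma sign_add (b d : ZMod (2 ^ q)) : sign (b + d) = sign b * sign d := by
  rcases q.eq_zero_or_pos with rfl | hq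
  · have h (x : ZMod (2 ^ 0)) : x.val = 0 := Nat.lt_one_iff.1 x.val_lt
    simp [sign, h]
  · rw [sign, sign, sign, ← pow_add, ZMod.val_add,
      ← pow_eq_pow_mod _ (Nat.even_pow.2 ⟨even_two, hq.ne'⟩).neg_one_pow]

lemma sign_nsmul (m : ℕ) (b : ZMod (2 ^ q)) : sign (m • b) = sign b ^ m := by
  induction m with
  | zero => simp [sign]
  | succ m ih => rw [succ_nsmul, sign_add, ih, pow_succ]

lemma sign_neg (b : ZMod (2 ^ q)) : sign (-b) = sign b := by
  have h : sign (-b) * sign b = 1 := by rw [← sign_add, neg_add_cancel]; simp [sign]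
  rw [mul_eq_one_iff_eq_inv.1 h, Int.units_inv_eq_self]

lemma sign_one (hq : q ≠ 0) : sign (1 : ZMod (2 ^ q)) = -1 := by
  have : Fact (1 < 2 ^ q) := ⟨Nat.one_lt_two_pow hq⟩
  rw [sign, ZMod.val_one, pow_one]

instance : Mul (DprimeModel A q) := ⟨fun x y => ⟨x.a + sign x.b • y.a, x.b + y.b⟩⟩
instance : One (DprimeModel A q) := ⟨⟨0, 0⟩⟩
instance : Inv (DprimeModel A q) := ⟨fun x => ⟨-(sign x.b • x.a), -x.b⟩⟩

@[simp] lemma mul_a (x y : DprimeModel A q) : (x * y).a = x.a + sign x.b • y.a := rfl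
@[simp] lemma mul_b (x y : DprimeModel A q) : (x * y).b = x.b + y.b := rfl
@[simp] lemma one_a : (1 : DprimeModel A q).a = 0 := rfl
@[simp] lemma one_b : (1 : DprimeModel A q).b = 0 := rfl
@[simp] lemma inv_a (x : DprimeModel A q) : x⁻¹.a = -(sign x.b • x.a) := rfl
@[simp] lemma inv_b (x : DprimeModel A q) : x⁻¹.b = -x.b := rfl
@[simp] lemma mk_mul_mk (a c : A) (b d : ZMod (2 ^ q)) :
    (⟨a, b⟩ * ⟨c, d⟩ : DprimeModel A q) = ⟨a + sign b • c, b + d⟩ := rfl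
@[simp] lemma inv_mk (a : A) (b : ZMod (2 ^ q)) :
    (⟨a, b⟩ : DprimeModel A q)⁻¹ = ⟨-(sign b • a), -b⟩ := rfl

instance : Group (DprimeModel A q) where
  mul_assoc x y z := by ext <;> simp [sign_add, smul_add, mul_smul, add_assoc]
  one_mul x := by ext <;> simp
  mul_one x := by ext <;> simp
  inv_mul_cancel x := by ext <;> simp [sign_neg]

@[simp] lemma mk_zero_zero : (⟨0, 0⟩ : DprimeModel A q) = 1 := rfl

lemma mk_eq_mul (a : A) (b : ZMod (2 ^ q)) : (⟨a, b⟩ : DprimeModel A q) = ⟨a, 0⟩ * ⟨0, b⟩ := by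
  ext <;> simp

lemma pow_b (x : DprimeModel A q) (m : ℕ) : (x ^ m).b = m • x.b := by
  induction m with
  | zero => simp
  | succ m ih => rw [pow_succ, mul_b, ih, succ_nsmul]

lemma pow_of_sign_eq_one {x : DprimeModel A q} (hx : sign x.b = 1) (m : ℕ) :
    x ^ m = ⟨m • x.a, m • x.b⟩ := by
  induction m with
  | zero => ext <;> simp
  | succ m ih =>
    have : sign (m • x.b) = 1 := by rw [sign_nsmul, hx, one_pow]
    rw [pow_succ, ih]
    ext
    · rw [mul_a, this, one_smul, succ_nsmul]
    · exact (succ_nsmul _ _).symm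

lemma mk_zero_pow (a : A) (m : ℕ) : (⟨a, 0⟩ : DprimeModel A q) ^ m = ⟨m • a, 0⟩ := by
  simp [pow_of_sign_eq_one]

lemma zero_mk_pow (b : ZMod (2 ^ q)) (m : ℕ) : (⟨0, b⟩ : DprimeModel A q) ^ m = ⟨0, m • b⟩ := by
  induction m with
  | zero => ext <;> simp
  | succ m ih => ext <;> simp [pow_succ, ih, add_one_mul]

lemma conj_mk_zero_mk_one (hq : q ≠ 0) (c a : A) :
    MulAut.conj (⟨c, 0⟩ : DprimeModel A q) ⟨a, 1⟩ = ⟨a + 2 • c, 1⟩ := by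
  ext <;> simp [sign_one hq, two_nsmul, add_comm, add_left_comm]

def map (f : A →+ B) : DprimeModel A q →* DprimeModel B q where
  toFun x := ⟨f x.a, x.b⟩
  map_one' := by ext <;> simp
  map_mul' x y := by ext <;> simp [Units.smul_def]

@[simp] lemma map_apply (f : A →+ B) (x : DprimeModel A q) : map f x = ⟨f x.a, x.b⟩ := rfl

lemma map_injective {f : A →+ B} (hf : Function.Injective f) :
    Function.Injective (map f : DprimeModel A q →* DprimeModel B q) := fun x y h => by
  rw [map_apply, map_apply, mk.injEq] at h
  ext
  exacts [hf h.1, h.2]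

def base (K : Subgroup (DprimeModel A q)) : AddSubgroup A where
  carrier := {a | (⟨a, 0⟩ : DprimeModel A q) ∈ K}
  zero_mem' := K.one_mem
  add_mem' {a c} ha hc := by simpa using K.mul_mem ha hc
  neg_mem' {a} ha := by simpa using K.inv_mem ha

@[simp] lemma mem_base {K : Subgroup (DprimeModel A q)} {a : A} : a ∈ base K ↔ ⟨a, 0⟩ ∈ K :=
  Iff.rfl

lemma zero_mk_mem {K : Subgroup (DprimeModel A q)} (hK : ⟨0, 1⟩ ∈ K) (b : ZMod (2 ^ q)) :
    ⟨0, b⟩ ∈ K := by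
  simpa [zero_mk_pow] using K.pow_mem hK b.val

lemma mem_iff_a_mem_base {K : Subgroup (DprimeModel A q)} (hK : ⟨0, 1⟩ ∈ K)
    (x : DprimeModel A q) : x ∈ K ↔ x.a ∈ base K := by
  calc x ∈ K ↔ ⟨x.a, 0⟩ * ⟨0, x.b⟩ ∈ K := by rw [← mk_eq_mul]
    _ ↔ x.a ∈ base K := K.mul_mem_cancel_right (zero_mk_mem hK x.b)

lemma eq_closure_of_zero_one_mem {K : Subgroup (DprimeModel A q)} (hK : ⟨0, 1⟩ ∈ K) {k : A}
    (hk : base K = AddSubgroup.zmultiples k) :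
    K = Subgroup.closure {⟨k, 0⟩, ⟨0, 1⟩} := by
  set L : Subgroup (DprimeModel A q) := Subgroup.closure {⟨k, 0⟩, ⟨0, 1⟩}
  have hL : ⟨0, 1⟩ ∈ L := Subgroup.subset_closure (by simp)
  have hLK : L ≤ K := by
    rw [Subgroup.closure_le, Set.pair_subset_iff]
    exact ⟨by simp [← mem_base, hk, AddSubgroup.mem_zmultiples], hK⟩
  have hbase : base K ≤ base L := by
    rw [hk, AddSubgroup.zmultiples_le]
    exact Subgroup.subset_closure (by simp)
  refine le_antisymm (fun x hx => ?_) hLK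
  rw [mem_iff_a_mem_base hL]
  exact hbase ((mem_iff_a_mem_base hK x).1 hx)

variable {n : ℕ}

lemma isCyclic_of_forall_even (hodd : Odd n) (K : Subgroup (DprimeModel (ZMod n) q))
    (hK : ∀ x ∈ K, Even x.b.val) : IsCyclic K := by
  have : NeZero n := ⟨hodd.pos.ne'⟩
  let z : DprimeModel (ZMod n) q := ⟨1, 1 + 1⟩
  have hz : sign z.b = 1 := by rw [sign_add, Int.units_mul_self]
  suffices K ≤ Subgroup.zpowers z from Subgroup.isCyclic_of_le this
  intro x hx
  obtain ⟨c, hc⟩ := hK x hx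
  obtain ⟨m, hma, hmc⟩ := Nat.chineseRemainder
    (Nat.Coprime.pow_right (q - 1) hodd.coprime_two_right) x.a.val c
  have hm2 : 2 * m ≡ 2 * c [MOD 2 ^ q] :=
    (hmc.mul_left' 2).of_dvd (by rw [← pow_succ']; exact pow_dvd_pow 2 (by omega))
  refine ⟨m, ?_⟩
  change z ^ (m : ℤ) = x
  rw [zpow_natCast, pow_of_sign_eq_one hz]
  ext
  · have := (ZMod.natCast_eq_natCast_iff _ _ _).2 hma
    rw [ZMod.natCast_zmod_val] at this
    simpa [z] using this
  · rw [← ZMod.natCast_zmod_val x.b, hc]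
    have := (ZMod.natCast_eq_natCast_iff _ _ _).2 hm2
    push_cast at this ⊢
    simp only [z, nsmul_eq_mul]
    linear_combination this

lemma exists_mk_one_mem (hodd : Odd n) (K : Subgroup (DprimeModel (ZMod n) q))
    (hK : ¬ IsCyclic K) : ∃ a, (⟨a, 1⟩ : DprimeModel (ZMod n) q) ∈ K := by
  obtain ⟨x, hx, hx_odd⟩ : ∃ x ∈ K, ¬ Even x.b.val := by
    by_contra! h
    exact hK (isCyclic_of_forall_even hodd K h)
  have hunit : IsUnit x.b := by
    rw [← ZMod.natCast_zmod_val x.b, ZMod.isUnit_iff_coprime]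
    exact Nat.Coprime.pow_right q (Nat.not_even_iff_odd.1 hx_odd).coprime_two_right
  obtain ⟨c, hc⟩ := hunit.exists_left_inv
  refine ⟨(x ^ c.val).a, ?_⟩
  convert K.pow_mem hx c.val
  rw [pow_b, nsmul_eq_mul, ZMod.natCast_zmod_val, hc]

theorem exists_conj_eq_closure (hodd : Odd n) (hq : q ≠ 0) (K : Subgroup (DprimeModel (ZMod n) q))
    (hK : ¬ IsCyclic K) :
    ∃ k : ℕ, k ∣ n ∧ ∃ g : DprimeModel (ZMod n) q,
      K.map (MulAut.conj g).toMonoidHom = Subgroup.closure {⟨k, 0⟩, ⟨0, 1⟩} := by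
  obtain ⟨a, ha⟩ := exists_mk_one_mem hodd K hK
  obtain ⟨h, h2⟩ : IsUnit (2 : ZMod n) := by
    exact_mod_cast (ZMod.isUnit_iff_coprime 2 n).2 (Nat.coprime_two_left.2 hodd)
  let g : DprimeModel (ZMod n) q := ⟨-(h⁻¹ * a), 0⟩
  have hw : ⟨0, 1⟩ ∈ K.map (MulAut.conj g).toMonoidHom := by
    refine ⟨⟨a, 1⟩, ha, ?_⟩
    have : (2 : ZMod n) * h⁻¹ = 1 := by rw [← h2, Units.mul_inv]
    rw [MulEquiv.coe_toMonoidHom, conj_mk_zero_mk_one hq, mk.injEq, nsmul_eq_mul]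
    constructor
    · push_cast
      linear_combination (-a) * this
    · rfl
  obtain ⟨k, hk, hbase⟩ := ZMod.exists_dvd_eq_zmultiples (base (K.map (MulAut.conj g).toMonoidHom))
  exact ⟨k, hk, g, eq_closure_of_zero_one_mem hw hbase⟩

end DprimeModel

namespace Dprime

variable {n q : ℕ}

lemma u_pow_n : u n q ^ n = 1 :=
  PresentedGroup.one_of_mem (x := FreeGroup.of 0 ^ n) (by simp [DprimeRels])

lemma w_pow_two_pow : w n q ^ 2 ^ q = 1 :=
  PresentedGroup.one_of_mem (x := FreeGroup.of 1 ^ 2 ^ q) (by simp [DprimeRels])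

lemma u_mul_w_mul_u : u n q * w n q * u n q = w n q :=
  PresentedGroup.mk_eq_mk_of_mul_inv_mem (by simp [DprimeRels])

lemma w_mul_u_mul_w_inv : w n q * u n q * (w n q)⁻¹ = (u n q)⁻¹ := by
  rw [mul_inv_eq_iff_eq_mul, eq_inv_mul_iff_mul_eq, ← mul_assoc, u_mul_w_mul_u]

lemma u_pow_mul_w_mul_u_pow (k : ℕ) : u n q ^ k * w n q * u n q ^ k = w n q := by
  induction k with
  | zero => simp
  | succ k ih =>
    calc u n q ^ (k + 1) * w n q * u n q ^ (k + 1)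
        = u n q ^ k * (u n q * w n q * u n q) * u n q ^ k := by group
      _ = w n q := by rw [u_mul_w_mul_u, ih]

lemma closure_u_w : Subgroup.closure {u n q, w n q} = ⊤ := by
  rw [← PresentedGroup.closure_range_of]
  congr
  ext x
  simp [Fin.exists_fin_two, u, w, eq_comm]

variable {G : Type*} [Group G]

def lift (x y : G) (hx : x ^ n = 1) (hy : y ^ 2 ^ q = 1) (hxy : x * y * x = y) :
    Dprime n q →* G :=
  PresentedGroup.toGroup (f := ![x, y]) (by simp [DprimeRels, hx, hy, hxy])

variable {x y : G} {hx : x ^ n = 1} {hy : y ^ 2 ^ q = 1} {hxy : x * y * x = y}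

@[simp] lemma lift_u : lift x y hx hy hxy (u n q) = x := PresentedGroup.toGroup.of _
@[simp] lemma lift_w : lift x y hx hy hxy (w n q) = y := PresentedGroup.toGroup.of _

open DprimeModel

def toModel (hq : q ≠ 0) : Dprime n q →* DprimeModel (ZMod n) q :=
  lift ⟨1, 0⟩ ⟨0, 1⟩ (by simp [mk_zero_pow]) (by simp [zero_mk_pow]) (by simp [sign_one hq])

def ofModel [NeZero n] : DprimeModel (ZMod n) q →* Dprime n q where
  toFun x := u n q ^ x.a.val * w n q ^ x.b.val
  map_one' := by simp
  map_mul' x y := by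
    have ha : u n q ^ (x.a + sign x.b • y.a).val =
        u n q ^ x.a.val * u n q ^ ((-1) ^ x.b.val * (y.a.val : ℤ)) := by
      rw [← zpow_natCast, ← zpow_natCast, ← zpow_add]
      apply zpow_eq_zpow_of_intCast_eq u_pow_n
      simp [Units.smul_def, sign]
    have hb : w n q ^ (x.b + y.b).val = w n q ^ x.b.val * w n q ^ y.b.val := by
      rw [ZMod.val_add, ← pow_eq_pow_mod _ w_pow_two_pow, pow_add]
    rw [mul_a, mul_b, ha, hb, ← pow_mul_zpow_mul_inv_of_conj_eq_inv w_mul_u_mul_w_inv,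
      zpow_natCast]
    group

def equivModel [NeZero n] (hq : q ≠ 0) : Dprime n q ≃* DprimeModel (ZMod n) q :=
  (toModel hq).toMulEquiv ofModel
    (PresentedGroup.ext fun i => by
      fin_cases i
      · change ofModel (toModel hq (u n q)) = u n q
        simp [toModel, ofModel, pow_zmod_val_one u_pow_n]
      · change ofModel (toModel hq (w n q)) = w n q
        simp [toModel, ofModel, pow_zmod_val_one w_pow_two_pow])
    (MonoidHom.ext fun x => by ext <;> simp [toModel, ofModel, mk_zero_pow, zero_mk_pow])

@[simp] lemma equivModel_u [NeZero n] (hq : q ≠ 0) : equivModel hq (u n q) = ⟨1, 0⟩ := by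
  simp [equivModel, toModel]
@[simp] lemma equivModel_w [NeZero n] (hq : q ≠ 0) : equivModel hq (w n q) = ⟨0, 1⟩ := by
  simp [equivModel, toModel]

theorem exists_conj_eq_closure (hodd : Odd n) (hq : q ≠ 0) (H : Subgroup (Dprime n q))
    (hH : ¬ IsCyclic H) :
    ∃ k : ℕ, k ∣ n ∧ ∃ g : Dprime n q,
      H.map (MulAut.conj g).toMonoidHom = Subgroup.closure {u n q ^ k, w n q} := by
  have : NeZero n := ⟨hodd.pos.ne'⟩
  let e := equivModel (n := n) hq
  have hH' : ¬ IsCyclic (H.map (e : Dprime n q →* DprimeModel (ZMod n) q)) :=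
    fun h => hH ((H.equivMapOfInjective _ e.injective).isCyclic.2 h)
  obtain ⟨k, hk, g, hg⟩ := DprimeModel.exists_conj_eq_closure hodd hq _ hH'
  refine ⟨k, hk, e.symm g, Subgroup.map_injective
    (f := (e : Dprime n q →* DprimeModel (ZMod n) q)) e.injective ?_⟩
  rw [Subgroup.map_map_conj_mulEquiv, e.apply_symm_apply, hg, MonoidHom.map_closure,
    Set.image_pair]
  simp [e, mk_zero_pow]

variable {k m : ℕ}

def embed (hkm : k * m = n) : Dprime m q →* Dprime n q :=
  lift (u n q ^ k) (w n q) (by rw [← pow_mul, hkm, u_pow_n]) w_pow_two_pow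
    (u_pow_mul_w_mul_u_pow k)

lemma range_embed (hkm : k * m = n) :
    (embed (q := q) hkm).range = Subgroup.closure {u n q ^ k, w n q} := by
  rw [MonoidHom.range_eq_map, ← closure_u_w, MonoidHom.map_closure, Set.image_pair, embed,
    lift_u, lift_w]

lemma toModel_comp_embed (hq : q ≠ 0) (hkm : k * m = n) :
    (toModel hq).comp (embed hkm) = (DprimeModel.map (ZMod.scale hkm)).comp (toModel hq) := by
  refine PresentedGroup.ext fun i => ?_
  fin_cases i
  · change toModel hq (embed hkm (u m q)) = DprimeModel.map _ (toModel hq (u m q))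
    simp [toModel, embed, mk_zero_pow, ZMod.scale_one]
  · change toModel hq (embed hkm (w m q)) = DprimeModel.map _ (toModel hq (w m q))
    simp [toModel, embed]

lemma embed_injective [NeZero m] (hq : q ≠ 0) (hk : k ≠ 0) (hkm : k * m = n) :
    Function.Injective (embed (q := q) hkm) := by
  apply Function.Injective.of_comp (f := toModel (n := n) hq)
  rw [← MonoidHom.coe_comp, toModel_comp_embed, MonoidHom.coe_comp]
  exact (map_injective (ZMod.scale_injective hk hkm)).comp (equivModel hq).injective

noncomputable def closureEquiv (hn : n ≠ 0) (hq : q ≠ 0) (hk : k ∣ n) :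
    Subgroup.closure {u n q ^ k, w n q} ≃* Dprime (n / k) q :=
  have hkm : k * (n / k) = n := Nat.mul_div_cancel' hk
  have : NeZero (n / k) := ⟨Nat.div_ne_zero_iff_of_dvd hk |>.2 ⟨hn, ne_zero_of_dvd_ne_zero hn hk⟩⟩
  ((MonoidHom.ofInjective (embed_injective hq (ne_zero_of_dvd_ne_zero hn hk) hkm)).trans
    (MulEquiv.subgroupCongr (range_embed hkm))).symm

lemma eq_top_of_normal_of_w_mem (hodd : Odd n) {H : Subgroup (Dprime n q)} (hN : H.Normal)
    (hw : w n q ∈ H) : H = ⊤ := by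
  have hu2 : u n q ^ 2 ∈ H := by
    have h : w n q * (u n q)⁻¹ * (w n q)⁻¹ = u n q := by
      rw [← conj_inv, w_mul_u_mul_w_inv, inv_inv]
    have : u n q ^ 2 = u n q * w n q * (u n q)⁻¹ * (w n q)⁻¹ :=
      calc u n q ^ 2 = u n q * (w n q * (u n q)⁻¹ * (w n q)⁻¹) := by rw [h, sq]
        _ = u n q * w n q * (u n q)⁻¹ * (w n q)⁻¹ := by group
    rw [this]
    exact H.mul_mem (hN.conj_mem _ hw _) (H.inv_mem hw)
  have hu : u n q ∈ H := by
    obtain ⟨t, ht⟩ := hodd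
    have : (u n q ^ 2) ^ (t + 1) = u n q := by
      rw [← pow_mul, show 2 * (t + 1) = n + 1 by omega, pow_succ, u_pow_n, one_mul]
    exact this ▸ H.pow_mem hu2 _
  rw [eq_top_iff, ← closure_u_w, Subgroup.closure_le, Set.pair_subset_iff]
  exact ⟨hu, hw⟩

end Dprime

theorem noncyclic_subgroups_Dprime_general (n q : ℕ) (hodd : Odd n) (hq : 1 < q)
    (H : Subgroup (Dprime n q)) (hH : ¬ IsCyclic H) :
    (∃ k : ℕ, k ∣ n ∧ ∃ g : Dprime n q,
        Subgroup.map (MulAut.conj g).toMonoidHom H =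
          Subgroup.closure {Dprime.u n q ^ k, Dprime.w n q} ∧
        Nonempty (H ≃* Dprime (n / k) q)) ∧
      (H.Normal → H = ⊤) := by
  obtain ⟨k, hk, g, hg⟩ := Dprime.exists_conj_eq_closure hodd (by omega) H hH
  refine ⟨⟨k, hk, g, hg, ⟨?_⟩⟩, fun hN => Dprime.eq_top_of_normal_of_w_mem hodd hN ?_⟩
  · exact (H.equivMapOfInjective _ (MulAut.conj g).injective).trans
      ((MulEquiv.subgroupCongr hg).trans (Dprime.closureEquiv hodd.pos.ne' (by omega) hk))
  · obtain ⟨y, hy, hyw⟩ : Dprime.w n q ∈ H.map (MulAut.conj g).toMonoidHom :=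
      hg ▸ Subgroup.subset_closure (by simp)
    rw [← hyw]
    exact hN.conj_mem y hy g

/-- Every non-cyclic subgroup of `D'_{n·2^q}` (`n` odd, `n > 1`, `q > 1`) is, up to
conjugacy, of the form `⟨u^k, w⟩ ≅ D'_{(n/k)·2^q}` for some divisor `k` of `n`; moreover such
a subgroup is normal only if it is the whole group. -/
theorem noncyclic_subgroups_Dprime (n q : ℕ) (hodd : Odd n) (hn : 1 < n) (hq : 1 < q)
    (H : Subgroup (Dprime n q)) (hH : ¬ IsCyclic H) :
    (∃ k : ℕ, k ∣ n ∧ ∃ g : Dprime n q,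
        Subgroup.map (MulAut.conj g).toMonoidHom H =
          Subgroup.closure {Dprime.u n q ^ k, Dprime.w n q} ∧
        Nonempty (H ≃* Dprime (n / k) q)) ∧
      (H.Normal → H = ⊤) :=
  noncyclic_subgroups_Dprime_general n q hodd hq H hH
end
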